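/- Let n be square-free and composite, and suppose that for every prime p dividing n, p − 1 divides n − 1. Then a^(n−1) ≡ 1 (mod n) for every integer a with gcd(a, n) = 1. -/

import Mathlib

theorem korselt_sufficiency (n : ℕ) (hsf : Squarefree n)
    (hcomp : 1 < n ∧ ¬ Nat.Prime n)
    (hdvd : ∀ p : ℕ, Nat.Prime p → p ∣ n → (p - 1) ∣ (n - 1)) :
    ∀ a : ℤ, Int.gcd a n = 1 → a ^ (n - 1) ≡ 1 [ZMOD n] := by
  intro a ha
  have h1 : 1 < n := hcomp.1
  -- for each prime p ∣ n, p ∣ a^(n-1) - 1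
  have key : ∀ p ∈ n.primeFactors, p ∣ (a ^ (n - 1) - 1).natAbs := by
    intro p hp
    obtain ⟨hpp, hpn, -⟩ := Nat.mem_primeFactors.mp hp
    haveI : Fact p.Prime := ⟨hpp⟩
    have hap : (a : ZMod p) ≠ 0 := by
      intro h
      rw [ZMod.intCast_zmod_eq_zero_iff_dvd] at h
      have : (p : ℤ) ∣ Int.gcd a n := Int.dvd_coe_gcd h (by exact_mod_cast Int.natCast_dvd_natCast.mpr hpn)
      rw [ha] at this
      exact hpp.one_lt.ne' (by exact_mod_cast Int.eq_one_of_dvd_one (by positivity) this)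
    obtain ⟨k, hk⟩ := hdvd p hpp hpn
    have fermat : (a : ZMod p) ^ (p - 1) = 1 := ZMod.pow_card_sub_one_eq_one hap
    have : (a : ZMod p) ^ (n - 1) = 1 := by
      rw [hk, pow_mul, fermat, one_pow]
    have hz : ((a ^ (n - 1) - 1 : ℤ) : ZMod p) = 0 := by push_cast [this]; ring
    rw [ZMod.intCast_zmod_eq_zero_iff_dvd] at hz
    exact Int.natCast_dvd_natCast.mp (Int.dvd_natAbs.mpr hz)
  have hprod : ∏ p ∈ n.primeFactors, p = n := Nat.prod_primeFactors_of_squarefree hsf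
  have hdvdn : n ∣ (a ^ (n - 1) - 1).natAbs := by
    have := Finset.prod_primes_dvd _ (fun p hp => (Nat.prime_of_mem_primeFactors hp).prime) key
    rwa [hprod] at this
  have : (n : ℤ) ∣ a ^ (n - 1) - 1 := Int.natCast_dvd_natCast.mpr hdvdn |>.trans (Int.natAbs_dvd.mpr dvd_rfl)
  exact Int.ModEq.symm (Int.modEq_iff_dvd.mpr (by simpa using this))
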